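/- arXiv:2108.07213 — 6 statements merged into one kernel-verified Lean document; each statement's English description precedes it below -/
import Mathlib

section
/- Pappus porism: Let W₁ ≠ W₂ be 2-dimensional subspaces of ℝ³ (two lines ℓ₁, ℓ₂) and let A₁, A₃, A₅ ∈ W₁ \ {0}, A₂, A₄, A₆ ∈ W₂ \ {0} be pairwise non-parallel vectors, none lying in W₁ ∩ W₂. Let P₁, P₂, P₃ be nonzero vectors such that {P₁,A₁,A₂}, {P₁,A₄,A₅}, {P₂,A₂,A₃}, {P₂,A₅,A₆}, {P₃,A₃,A₄}, {P₃,A₆,A₁} are each linearly dependent, with P₁, P₂, P₃ pairwise non-parallel and no Pᵢ parallel to any Aⱼ. Then for every A₁' ∈ W₁ \ {0} with A₁' ∉ W₂ and A₁' ∉ span{P₁,P₂}, there exist A₂', A₄', A₆' ∈ W₂ \ {0} and A₃', A₅' ∈ W₁ \ {0} such that {P₁,A₁',A₂'}, {P₁,A₄',A₅'}, {P₂,A₂',A₃'}, {P₂,A₅',A₆'}, {P₃,A₃',A₄'}, {P₃,A₆',A₁'} are each linearly dependent. -/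
/-- Three projective points (given by representing vectors) are collinear iff the
vectors are linearly dependent. -/
def dep3 (P A B : Fin 3 → ℝ) : Prop := ¬ LinearIndependent ℝ ![P, A, B]

/-!
Take a basis `b₀, b₁, b₂` with `W₁ = ⟨b₀, b₁⟩` and `W₂ = ⟨b₀, b₂⟩`, and use on each line the affine
coordinate that sends the common point `O = [b₀]` to infinity: `x` stands for `[x b₀ + b₁]` on `ℓ₁`
and `y` for `[y b₀ + b₂]` on `ℓ₂`. A point `P = p b₀ + s b₁ + t b₂` off both lines is collinear
with `x` and `y` iff `s x + t y = p`, so the perspectivities through `P` between the two lines are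
affine maps of slopes `-s/t` and `-t/s`. Going once around the hexagon uses each `Pᵢ` once in each
direction, so the six slopes multiply to `1`: the composite is a translation of `ℓ₁`. The given
hexagon provides a fixed point, hence the composite is the identity and every starting point
closes up.
-/

open Module LinearMap

section

variable {K : Type*} [Field K]

-- The `dᵢ` are the displacements of the six vertices between two hexagons: the composite of the
-- perspectivities is a translation, so five closed sides force the sixth.
theorem affine_hexagon_closes {s₁ t₁ s₂ t₂ s₃ t₃ d₁ d₂ d₃ d₄ d₅ d₆ : K} (hs₁ : s₁ ≠ 0)
    (ht₂ : t₂ ≠ 0) (h₁ : s₁ * d₁ + t₁ * d₂ = 0) (h₂ : s₁ * d₅ + t₁ * d₄ = 0)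
    (h₃ : s₂ * d₃ + t₂ * d₂ = 0) (h₄ : s₂ * d₅ + t₂ * d₆ = 0) (h₅ : s₃ * d₃ + t₃ * d₄ = 0) :
    s₃ * d₁ + t₃ * d₆ = 0 := by
  have : s₁ * t₂ * (s₃ * d₁ + t₃ * d₆) = 0 := by
    linear_combination s₃ * t₂ * h₁ - s₃ * t₁ * h₃ + t₁ * s₂ * h₅ - s₂ * t₃ * h₂ + s₁ * t₃ * h₄
  simpa [hs₁, ht₂] using this

theorem exists_affine_hexagon {s₁ t₁ p₁ s₂ t₂ p₂ s₃ t₃ p₃ : K} (hs₁ : s₁ ≠ 0) (ht₁ : t₁ ≠ 0)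
    (hs₂ : s₂ ≠ 0) (ht₂ : t₂ ≠ 0) (ht₃ : t₃ ≠ 0) {x₁ y₂ x₃ y₄ x₅ y₆ : K}
    (h₁ : s₁ * x₁ + t₁ * y₂ = p₁) (h₂ : s₁ * x₅ + t₁ * y₄ = p₁)
    (h₃ : s₂ * x₃ + t₂ * y₂ = p₂) (h₄ : s₂ * x₅ + t₂ * y₆ = p₂)
    (h₅ : s₃ * x₃ + t₃ * y₄ = p₃) (h₆ : s₃ * x₁ + t₃ * y₆ = p₃) (x₁' : K) :
    ∃ y₂' x₃' y₄' x₅' y₆' : K, s₁ * x₁' + t₁ * y₂' = p₁ ∧ s₁ * x₅' + t₁ * y₄' = p₁ ∧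
      s₂ * x₃' + t₂ * y₂' = p₂ ∧ s₂ * x₅' + t₂ * y₆' = p₂ ∧
      s₃ * x₃' + t₃ * y₄' = p₃ ∧ s₃ * x₁' + t₃ * y₆' = p₃ := by
  have solve_y {s t p : K} (ht : t ≠ 0) (x : K) : ∃ y, s * x + t * y = p :=
    ⟨(p - s * x) / t, by field_simp; ring⟩
  have solve_x {s t p : K} (hs : s ≠ 0) (y : K) : ∃ x, s * x + t * y = p :=
    ⟨(p - t * y) / s, by field_simp; ring⟩
  obtain ⟨y₂', e₁⟩ := solve_y (p := p₁) ht₁ x₁'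
  obtain ⟨x₃', e₃⟩ := solve_x (p := p₂) hs₂ y₂'
  obtain ⟨y₄', e₅⟩ := solve_y (p := p₃) ht₃ x₃'
  obtain ⟨x₅', e₂⟩ := solve_x (p := p₁) hs₁ y₄'
  obtain ⟨y₆', e₄⟩ := solve_y (p := p₂) ht₂ x₅'
  refine ⟨y₂', x₃', y₄', x₅', y₆', e₁, e₂, e₃, e₄, e₅, ?_⟩
  have := affine_hexagon_closes (t₁ := t₁) (s₂ := s₂) (s₃ := s₃) (t₃ := t₃) (d₁ := x₁' - x₁)
    (d₂ := y₂' - y₂) (d₃ := x₃' - x₃) (d₄ := y₄' - y₄) (d₅ := x₅' - x₅) (d₆ := y₆' - y₆) hs₁ ht₂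
    (by linear_combination e₁ - h₁) (by linear_combination e₂ - h₂)
    (by linear_combination e₃ - h₃) (by linear_combination e₄ - h₄)
    (by linear_combination e₅ - h₅)
  linear_combination this + h₆

end

section

variable {K V : Type*} [Field K] [AddCommGroup V] [Module K V]

theorem Module.Basis.eq_ker_coord {ι : Type*} [Fintype ι] [DecidableEq ι] (b : Basis ι K V)
    {W : Submodule K V} {k : ι} (hW : ∀ i ≠ k, b i ∈ W) (hk : b k ∉ W) :
    W = ker (b.coord k) := by
  ext v
  have hrest : ∑ i ∈ Finset.univ.erase k, b.repr v i • b i ∈ W :=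
    Submodule.sum_mem _ fun i hi => W.smul_mem _ (hW i (Finset.ne_of_mem_erase hi))
  rw [mem_ker, Basis.coord_apply]
  conv_lhs => rw [← b.sum_repr v, ← Finset.add_sum_erase _ _ (Finset.mem_univ k),
    Submodule.add_mem_iff_left _ hrest]
  exact ⟨fun h => by_contra fun h0 => hk ((W.smul_mem_iff h0).mp h), fun h => by simp [h]⟩

theorem exists_basis_eq_ker_coord (hV : finrank K V = 3) {W₁ W₂ : Submodule K V}
    (h₁ : finrank K W₁ = 2) (h₂ : finrank K W₂ = 2) (hW : W₁ ≠ W₂) :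
    ∃ b : Basis (Fin 3) K V, W₁ = ker (b.coord 2) ∧ W₂ = ker (b.coord 1) := by
  have : FiniteDimensional K V := .of_finrank_pos (by omega)
  obtain ⟨u, ⟨hu₁, hu₂⟩, hu⟩ : ∃ u ∈ W₁ ⊓ W₂, u ≠ 0 := by
    refine Submodule.exists_mem_ne_zero_of_ne_bot fun hbot => ?_
    have hsum := Submodule.finrank_sup_add_finrank_inf_eq W₁ W₂
    have hle := Submodule.finrank_le (W₁ ⊔ W₂)
    rw [hbot, finrank_bot] at hsum
    omega
  have exists_mem_not_mem {U U' : Submodule K V} (h : finrank K U = 2) (h' : finrank K U' = 2)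
      (hne : U ≠ U') : ∃ e ∈ U, e ∉ U' :=
    Set.not_subset.mp fun hle => hne (Submodule.eq_of_le_of_finrank_eq hle (h.trans h'.symm))
  obtain ⟨e₁, he₁, he₁'⟩ := exists_mem_not_mem h₁ h₂ hW
  obtain ⟨e₂, he₂, he₂'⟩ := exists_mem_not_mem h₂ h₁ hW.symm
  have hli : LinearIndependent K ![u, e₁, e₂] := by
    have h : ![u, e₁, e₂] = Fin.snoc ![u, e₁] e₂ := by ext i; fin_cases i <;> rfl
    rw [h, linearIndependent_finSnoc, LinearIndependent.pair_iff' hu]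
    refine ⟨fun a h => he₁' (h ▸ W₂.smul_mem a hu₂), fun h => he₂' (Submodule.span_le.mpr ?_ h)⟩
    simpa [Set.insert_subset_iff, he₁] using hu₁
  let b := basisOfLinearIndependentOfCardEqFinrank hli (by simp [hV])
  have hb : ⇑b = ![u, e₁, e₂] := coe_basisOfLinearIndependentOfCardEqFinrank hli _
  refine ⟨b, b.eq_ker_coord ?_ (by simpa [hb]), b.eq_ker_coord ?_ (by simpa [hb])⟩
  · intro i hi; fin_cases i <;> simp_all
  · intro i hi; fin_cases i <;> simp_all

theorem Module.Basis.linearIndependent_iff_det_ne_zero {ι : Type*} [Fintype ι] [DecidableEq ι]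
    (b : Basis ι K V) {v : ι → V} : LinearIndependent K v ↔ b.det v ≠ 0 := by
  have := b.finiteDimensional_of_finite
  rw [← isUnit_iff_ne_zero, ← b.is_basis_iff_det]
  exact ⟨fun h => ⟨h, h.span_eq_top_of_card_eq_finrank' (finrank_eq_card_basis b).symm⟩, And.left⟩

theorem LinearIndependent.triple_swap_left_iff {x y z : V} :
    LinearIndependent K ![x, y, z] ↔ LinearIndependent K ![y, x, z] := by
  rw [← linearIndependent_equiv (Equiv.swap 0 1)]
  convert Iff.rfl using 2
  ext i; fin_cases i <;> rfl

theorem LinearIndependent.triple_swap_right_iff {x y z : V} :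
    LinearIndependent K ![x, y, z] ↔ LinearIndependent K ![x, z, y] := by
  rw [← linearIndependent_equiv (Equiv.swap 1 2)]
  convert Iff.rfl using 2
  ext i; fin_cases i <;> rfl

theorem mem_of_not_linearIndependent {W : Submodule K V} {P X Y : V}
    (h : ¬ LinearIndependent K ![P, X, Y]) (hPY : LinearIndependent K ![P, Y]) (hP : P ∈ W)
    (hY : Y ∈ W) : X ∈ W := by
  rw [LinearIndependent.triple_swap_left_iff] at h
  have hX : X ∈ Submodule.span K (Set.range ![P, Y]) :=
    by_contra fun hX => h (linearIndependent_finCons.mpr ⟨hPY, hX⟩)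
  refine Submodule.span_le.mpr ?_ hX
  simpa [Set.insert_subset_iff, hP] using hY

variable (b : Basis (Fin 3) K V)

theorem Module.Basis.not_linearIndependent_iff_affine {P X Y : V}
    (hX : X ∈ (ker (b.coord 2) : Set V) \ ker (b.coord 1))
    (hY : Y ∈ (ker (b.coord 1) : Set V) \ ker (b.coord 2)) :
    ¬ LinearIndependent K ![P, X, Y] ↔
      b.coord 1 P * (b.coord 0 X / b.coord 1 X) + b.coord 2 P * (b.coord 0 Y / b.coord 2 Y) =
        b.coord 0 P := by
  obtain ⟨hX₂, hX₁⟩ := hX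
  obtain ⟨hY₁, hY₂⟩ := hY
  simp only [SetLike.mem_coe, mem_ker, Basis.coord_apply] at *
  rw [b.linearIndependent_iff_det_ne_zero, not_not, b.det_apply, Matrix.det_fin_three]
  simp [Basis.toMatrix_apply, hX₂, hY₁]
  field_simp
  constructor <;> intro h <;> linear_combination -h

theorem Module.Basis.not_linearIndependent_swap_iff_affine {P X Y : V}
    (hX : X ∈ (ker (b.coord 2) : Set V) \ ker (b.coord 1))
    (hY : Y ∈ (ker (b.coord 1) : Set V) \ ker (b.coord 2)) :
    ¬ LinearIndependent K ![P, Y, X] ↔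
      b.coord 1 P * (b.coord 0 X / b.coord 1 X) + b.coord 2 P * (b.coord 0 Y / b.coord 2 Y) =
        b.coord 0 P := by
  rw [LinearIndependent.triple_swap_right_iff, b.not_linearIndependent_iff_affine hX hY]

theorem Module.Basis.coord_ne_zero_of_not_linearIndependent {P X Y : V}
    (hX : X ∈ (ker (b.coord 2) : Set V) \ ker (b.coord 1))
    (hY : Y ∈ (ker (b.coord 1) : Set V) \ ker (b.coord 2))
    (h : ¬ LinearIndependent K ![P, X, Y]) (hPX : LinearIndependent K ![P, X])
    (hPY : LinearIndependent K ![P, Y]) : b.coord 1 P ≠ 0 ∧ b.coord 2 P ≠ 0 := by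
  refine ⟨fun hP => hX.2 (mem_of_not_linearIndependent h hPY hP hY.1), fun hP => ?_⟩
  rw [LinearIndependent.triple_swap_right_iff] at h
  exact hY.2 (mem_of_not_linearIndependent h hPX hP hX.1)

theorem Module.Basis.smul_add_mem_diff₁ (x : K) :
    x • b 0 + b 1 ∈ (ker (b.coord 2) : Set V) \ ker (b.coord 1) := by
  simp

theorem Module.Basis.smul_add_mem_diff₂ (y : K) :
    y • b 0 + b 2 ∈ (ker (b.coord 1) : Set V) \ ker (b.coord 2) := by
  simp

theorem Module.Basis.exists_hexagon_of_hexagon {P₁ P₂ P₃ X₁ Y₂ X₃ Y₄ X₅ Y₆ X₁' : V}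
    (hX₁ : X₁ ∈ (ker (b.coord 2) : Set V) \ ker (b.coord 1))
    (hX₃ : X₃ ∈ (ker (b.coord 2) : Set V) \ ker (b.coord 1))
    (hX₅ : X₅ ∈ (ker (b.coord 2) : Set V) \ ker (b.coord 1))
    (hY₂ : Y₂ ∈ (ker (b.coord 1) : Set V) \ ker (b.coord 2))
    (hY₄ : Y₄ ∈ (ker (b.coord 1) : Set V) \ ker (b.coord 2))
    (hY₆ : Y₆ ∈ (ker (b.coord 1) : Set V) \ ker (b.coord 2))
    (h₁ : ¬ LinearIndependent K ![P₁, X₁, Y₂]) (h₂ : ¬ LinearIndependent K ![P₁, Y₄, X₅])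
    (h₃ : ¬ LinearIndependent K ![P₂, Y₂, X₃]) (h₄ : ¬ LinearIndependent K ![P₂, X₅, Y₆])
    (h₅ : ¬ LinearIndependent K ![P₃, X₃, Y₄]) (h₆ : ¬ LinearIndependent K ![P₃, Y₆, X₁])
    (hP₁ : LinearIndependent K ![P₁, X₁] ∧ LinearIndependent K ![P₁, Y₂])
    (hP₂ : LinearIndependent K ![P₂, X₅] ∧ LinearIndependent K ![P₂, Y₆])
    (hP₃ : LinearIndependent K ![P₃, X₃] ∧ LinearIndependent K ![P₃, Y₄])
    (hX₁' : X₁' ∈ (ker (b.coord 2) : Set V) \ ker (b.coord 1)) :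
    ∃ Y₂' X₃' Y₄' X₅' Y₆' : V,
      Y₂' ∈ (ker (b.coord 1) : Set V) \ ker (b.coord 2) ∧
      Y₄' ∈ (ker (b.coord 1) : Set V) \ ker (b.coord 2) ∧
      Y₆' ∈ (ker (b.coord 1) : Set V) \ ker (b.coord 2) ∧
      X₃' ∈ (ker (b.coord 2) : Set V) \ ker (b.coord 1) ∧
      X₅' ∈ (ker (b.coord 2) : Set V) \ ker (b.coord 1) ∧
      ¬ LinearIndependent K ![P₁, X₁', Y₂'] ∧ ¬ LinearIndependent K ![P₁, Y₄', X₅'] ∧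
      ¬ LinearIndependent K ![P₂, Y₂', X₃'] ∧ ¬ LinearIndependent K ![P₂, X₅', Y₆'] ∧
      ¬ LinearIndependent K ![P₃, X₃', Y₄'] ∧ ¬ LinearIndependent K ![P₃, Y₆', X₁'] := by
  obtain ⟨hs₁, ht₁⟩ := b.coord_ne_zero_of_not_linearIndependent hX₁ hY₂ h₁ hP₁.1 hP₁.2
  obtain ⟨hs₂, ht₂⟩ := b.coord_ne_zero_of_not_linearIndependent hX₅ hY₆ h₄ hP₂.1 hP₂.2
  obtain ⟨-, ht₃⟩ := b.coord_ne_zero_of_not_linearIndependent hX₃ hY₄ h₅ hP₃.1 hP₃.2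
  obtain ⟨y₂, x₃, y₄, x₅, y₆, e₁, e₂, e₃, e₄, e₅, e₆⟩ := exists_affine_hexagon hs₁ ht₁ hs₂ ht₂ ht₃
    ((b.not_linearIndependent_iff_affine hX₁ hY₂).1 h₁)
    ((b.not_linearIndependent_swap_iff_affine hX₅ hY₄).1 h₂)
    ((b.not_linearIndependent_swap_iff_affine hX₃ hY₂).1 h₃)
    ((b.not_linearIndependent_iff_affine hX₅ hY₆).1 h₄)
    ((b.not_linearIndependent_iff_affine hX₃ hY₄).1 h₅)
    ((b.not_linearIndependent_swap_iff_affine hX₁ hY₆).1 h₆)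
    (b.coord 0 X₁' / b.coord 1 X₁')
  have q₁ := b.smul_add_mem_diff₁
  have q₂ := b.smul_add_mem_diff₂
  exact ⟨_, _, _, _, _, q₂ y₂, q₂ y₄, q₂ y₆, q₁ x₃, q₁ x₅,
    (b.not_linearIndependent_iff_affine hX₁' (q₂ y₂)).2 (by simpa using e₁),
    (b.not_linearIndependent_swap_iff_affine (q₁ x₅) (q₂ y₄)).2 (by simpa using e₂),
    (b.not_linearIndependent_swap_iff_affine (q₁ x₃) (q₂ y₂)).2 (by simpa using e₃),
    (b.not_linearIndependent_iff_affine (q₁ x₅) (q₂ y₆)).2 (by simpa using e₄),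
    (b.not_linearIndependent_iff_affine (q₁ x₃) (q₂ y₄)).2 (by simpa using e₅),
    (b.not_linearIndependent_swap_iff_affine hX₁' (q₂ y₆)).2 (by simpa using e₆)⟩

end

theorem pappus_porism_general
    (W₁ W₂ : Submodule ℝ (Fin 3 → ℝ))
    (hdim₁ : Module.finrank ℝ W₁ = 2) (hdim₂ : Module.finrank ℝ W₂ = 2)
    (hW : W₁ ≠ W₂)
    (A : Fin 6 → (Fin 3 → ℝ))
    (hA1 : A 0 ∈ W₁) (hA3 : A 2 ∈ W₁) (hA5 : A 4 ∈ W₁)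
    (hA2 : A 1 ∈ W₂) (hA4 : A 3 ∈ W₂) (hA6 : A 5 ∈ W₂)
    (hAmeet : ∀ i, A i ∉ W₁ ⊓ W₂)
    (P₁ P₂ P₃ : Fin 3 → ℝ)
    (h1 : dep3 P₁ (A 0) (A 1)) (h2 : dep3 P₁ (A 3) (A 4))
    (h3 : dep3 P₂ (A 1) (A 2)) (h4 : dep3 P₂ (A 4) (A 5))
    (h5 : dep3 P₃ (A 2) (A 3)) (h6 : dep3 P₃ (A 5) (A 0))
    (hPA : ∀ i, LinearIndependent ℝ ![P₁, A i] ∧ LinearIndependent ℝ ![P₂, A i] ∧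
      LinearIndependent ℝ ![P₃, A i]) :
    ∀ A₁' : Fin 3 → ℝ, A₁' ∈ W₁ → A₁' ≠ 0 → A₁' ∉ W₂ →
      A₁' ∉ Submodule.span ℝ {P₁, P₂} →
      ∃ A₂' A₃' A₄' A₅' A₆' : Fin 3 → ℝ,
        A₂' ∈ W₂ ∧ A₄' ∈ W₂ ∧ A₆' ∈ W₂ ∧ A₃' ∈ W₁ ∧ A₅' ∈ W₁ ∧
        A₂' ≠ 0 ∧ A₃' ≠ 0 ∧ A₄' ≠ 0 ∧ A₅' ≠ 0 ∧ A₆' ≠ 0 ∧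
        dep3 P₁ A₁' A₂' ∧ dep3 P₁ A₄' A₅' ∧
        dep3 P₂ A₂' A₃' ∧ dep3 P₂ A₅' A₆' ∧
        dep3 P₃ A₃' A₄' ∧ dep3 P₃ A₆' A₁' := by
  intro A₁' hA₁'₁ _ hA₁'₂ _
  obtain ⟨b, rfl, rfl⟩ := exists_basis_eq_ker_coord (by simp) hdim₁ hdim₂ hW
  have on₁ {X : Fin 3 → ℝ} (h₁ : X ∈ ker (b.coord 2)) (h : X ∉ ker (b.coord 2) ⊓ ker (b.coord 1)) :
      X ∈ (ker (b.coord 2) : Set (Fin 3 → ℝ)) \ ker (b.coord 1) := ⟨h₁, fun h₂ => h ⟨h₁, h₂⟩⟩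
  have on₂ {Y : Fin 3 → ℝ} (h₂ : Y ∈ ker (b.coord 1)) (h : Y ∉ ker (b.coord 2) ⊓ ker (b.coord 1)) :
      Y ∈ (ker (b.coord 1) : Set (Fin 3 → ℝ)) \ ker (b.coord 2) := ⟨h₂, fun h₁ => h ⟨h₁, h₂⟩⟩
  have ne_zero {W W' : Submodule ℝ (Fin 3 → ℝ)} {v} (hv : v ∈ (W : Set (Fin 3 → ℝ)) \ W') :
      v ≠ 0 := fun h => hv.2 (h ▸ W'.zero_mem)
  obtain ⟨A₂', A₃', A₄', A₅', A₆', a₂, a₄, a₆, a₃, a₅, h⟩ := b.exists_hexagon_of_hexagon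
    (on₁ hA1 (hAmeet 0)) (on₁ hA3 (hAmeet 2)) (on₁ hA5 (hAmeet 4))
    (on₂ hA2 (hAmeet 1)) (on₂ hA4 (hAmeet 3)) (on₂ hA6 (hAmeet 5)) h1 h2 h3 h4 h5 h6
    ⟨(hPA 0).1, (hPA 1).1⟩ ⟨(hPA 4).2.1, (hPA 5).2.1⟩ ⟨(hPA 2).2.2, (hPA 3).2.2⟩ ⟨hA₁'₁, hA₁'₂⟩
  exact ⟨A₂', A₃', A₄', A₅', A₆', a₂.1, a₄.1, a₆.1, a₃.1, a₅.1,
    ne_zero a₂, ne_zero a₃, ne_zero a₄, ne_zero a₅, ne_zero a₆, h⟩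

/-- **Pappus porism.** Given a Pappus hexagon `A 0, …, A 5` on the lines `W₁, W₂` with
intersection points `P₁, P₂, P₃`, every admissible starting point `A₁'` on `W₁` extends to
a Pappus hexagon with the same intersection points. -/
theorem pappus_porism
    (W₁ W₂ : Submodule ℝ (Fin 3 → ℝ))
    (hdim₁ : Module.finrank ℝ W₁ = 2) (hdim₂ : Module.finrank ℝ W₂ = 2)
    (hW : W₁ ≠ W₂)
    (A : Fin 6 → (Fin 3 → ℝ))
    (hA0 : ∀ i, A i ≠ 0)
    (hA1 : A 0 ∈ W₁) (hA3 : A 2 ∈ W₁) (hA5 : A 4 ∈ W₁)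
    (hA2 : A 1 ∈ W₂) (hA4 : A 3 ∈ W₂) (hA6 : A 5 ∈ W₂)
    (hApar : ∀ i j, i ≠ j → LinearIndependent ℝ ![A i, A j])
    (hAmeet : ∀ i, A i ∉ W₁ ⊓ W₂)
    (P₁ P₂ P₃ : Fin 3 → ℝ)
    (hP₁ : P₁ ≠ 0) (hP₂ : P₂ ≠ 0) (hP₃ : P₃ ≠ 0)
    (h1 : dep3 P₁ (A 0) (A 1)) (h2 : dep3 P₁ (A 3) (A 4))
    (h3 : dep3 P₂ (A 1) (A 2)) (h4 : dep3 P₂ (A 4) (A 5))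
    (h5 : dep3 P₃ (A 2) (A 3)) (h6 : dep3 P₃ (A 5) (A 0))
    (hP12 : LinearIndependent ℝ ![P₁, P₂])
    (hP13 : LinearIndependent ℝ ![P₁, P₃])
    (hP23 : LinearIndependent ℝ ![P₂, P₃])
    (hPA : ∀ i, LinearIndependent ℝ ![P₁, A i] ∧ LinearIndependent ℝ ![P₂, A i] ∧
      LinearIndependent ℝ ![P₃, A i]) :
    ∀ A₁' : Fin 3 → ℝ, A₁' ∈ W₁ → A₁' ≠ 0 → A₁' ∉ W₂ →
      A₁' ∉ Submodule.span ℝ {P₁, P₂} →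
      ∃ A₂' A₃' A₄' A₅' A₆' : Fin 3 → ℝ,
        A₂' ∈ W₂ ∧ A₄' ∈ W₂ ∧ A₆' ∈ W₂ ∧ A₃' ∈ W₁ ∧ A₅' ∈ W₁ ∧
        A₂' ≠ 0 ∧ A₃' ≠ 0 ∧ A₄' ≠ 0 ∧ A₅' ≠ 0 ∧ A₆' ≠ 0 ∧
        dep3 P₁ A₁' A₂' ∧ dep3 P₁ A₄' A₅' ∧
        dep3 P₂ A₂' A₃' ∧ dep3 P₂ A₅' A₆' ∧
        dep3 P₃ A₃' A₄' ∧ dep3 P₃ A₆' A₁' :=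
  pappus_porism_general W₁ W₂ hdim₁ hdim₂ hW A hA1 hA3 hA5 hA2 hA4 hA6 hAmeet P₁ P₂ P₃ h1 h2 h3 h4
    h5 h6 hPA
end

section
/- Scissors porism: Let W₁ ≠ W₂ be 2-dimensional subspaces of ℝ³ (lines ℓ₁, ℓ₂) and L a further 2-dimensional subspace (a line ℓ). Let A₁, A₃ ∈ W₁ \ {0} and A₂, A₄ ∈ W₂ \ {0} be pairwise non-parallel, none lying in W₁ ∩ W₂ nor in L, and assume span{Aᵢ, Aᵢ₊₁} ≠ L for i = 1,…,4 (indices mod 4). Let P₁,…,P₄ ∈ L \ {0} be such that {Pᵢ, Aᵢ, Aᵢ₊₁} is linearly dependent for i = 1,…,4 (indices mod 4). Then for every A₁' ∈ W₁ \ {0} with A₁' ∉ W₂ and A₁' ∉ L, there exist A₂', A₄' ∈ W₂ \ {0} and A₃' ∈ W₁ \ {0} such that {Pᵢ, Aᵢ', Aᵢ₊₁'} is linearly dependent for i = 1,…,4 (indices mod 4). -/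
/-!
Write `W₁ = ker ψ` and `W₂ = ker φ`. The projection from a point `P` onto the plane `ker φ` is
the linear map `X ↦ φ P • X - φ X • P`, so going once around a Scissors quadrilateral composes
four such projections into a linear map `T` of `ℝ³` preserving `W₁`. Modulo `L` each projection
is multiplication by a scalar, hence `T ≡ a` modulo `L` for the product `a` of these scalars,
and `T = a` on `W₁ ∩ W₂`. The given quadrilateral closes, so `T A₁` is a multiple of `A₁`, which
must be `a • A₁` because `A₁ ∉ L`. As `W₁` is spanned by `W₁ ∩ W₂` and `A₁`, `T = a` on all of
`W₁`, i.e. the construction closes up from every starting point `A₁'`.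
-/

open Module Submodule

section LinearAlgebra

variable {K V : Type*} [Field K] [AddCommGroup V] [Module K V]

theorem LinearMap.eqOn_of_eqOn_inf_ker {V' : Type*} [AddCommGroup V'] [Module K V']
    {f g : V →ₗ[K] V'} {φ : Dual K V} {W : Submodule K V} {A : V} (hA : A ∈ W) (hφA : φ A ≠ 0)
    (hfgA : f A = g A) (hfg : Set.EqOn f g (W ⊓ LinearMap.ker φ : Submodule K V)) :
    Set.EqOn f g W := by
  intro X hX
  set c := φ X / φ A
  have hY : φ (X - c • A) = 0 := by simp [c, div_mul_cancel₀ _ hφA]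
  have := hfg ⟨W.sub_mem hX (W.smul_mem c hA), hY⟩
  rwa [map_sub, map_sub, map_smul, map_smul, hfgA, sub_left_inj] at this

theorem exists_dual_ker_eq [FiniteDimensional K V] (W : Submodule K V)
    (hW : finrank K W + 1 = finrank K V) : ∃ φ : Dual K V, LinearMap.ker φ = W := by
  have hq : finrank K (V ⧸ W) = finrank K K := by
    have := W.finrank_quotient_add_finrank
    rw [finrank_self]; omega
  let e : (V ⧸ W) ≃ₗ[K] K := LinearEquiv.ofFinrankEq _ _ hq
  refine ⟨e.toLinearMap ∘ₗ W.mkQ, ?_⟩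
  rw [LinearMap.ker_comp, LinearEquiv.ker, comap_bot, ker_mkQ]

theorem linearIndependent_pair_of_mem_of_notMem {L : Submodule K V} {P X : V}
    (hP : P ∈ L) (hP0 : P ≠ 0) (hX : X ∉ L) : LinearIndependent K ![P, X] :=
  (LinearIndependent.pair_iff' hP0).2 fun a h => hX (h ▸ L.smul_mem a hP)

/-- Projection from the point `P` onto the hyperplane `ker φ`, scaled by `φ P` so that it is
defined (and linear) for every `P`. -/
def centralProj (φ : Dual K V) (P : V) : V →ₗ[K] V :=
  φ P • LinearMap.id - φ.smulRight P

section CentralProjection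

variable (φ : Dual K V) (P : V)

theorem centralProj_apply (X : V) : centralProj φ P X = φ P • X - φ X • P := rfl

@[simp]
theorem apply_centralProj (X : V) : φ (centralProj φ P X) = 0 := by
  simp [centralProj_apply, mul_comm]

theorem centralProj_of_apply_eq_zero {X : V} (hX : φ X = 0) : centralProj φ P X = φ P • X := by
  simp [centralProj_apply, hX]

theorem centralProj_mem_span_pair (X : V) : centralProj φ P X ∈ span K {P, X} :=
  mem_span_pair.2 ⟨-φ X, φ P, by rw [centralProj_apply]; module⟩

theorem centralProj_sub_smul_mem {L : Submodule K V} (hP : P ∈ L) (X : V) :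
    centralProj φ P X - φ P • X ∈ L := by
  rw [centralProj_apply, sub_sub_cancel_left]
  exact L.neg_mem (L.smul_mem _ hP)

theorem centralProj_mem_span_singleton {A B : V} (hA : A ∈ span K {P, B}) (hB : φ B = 0) :
    centralProj φ P A ∈ span K {B} := by
  obtain ⟨s, t, rfl⟩ := mem_span_pair.1 hA
  rw [map_add, map_smul, map_smul, centralProj_of_apply_eq_zero φ P hB, centralProj_apply,
    sub_self, smul_zero, zero_add, smul_smul]
  exact smul_mem _ _ (mem_span_singleton_self B)

theorem apply_ne_zero_of_mem_span_pair {A B : V} (hA : A ∈ span K {P, B}) (hB : φ B = 0)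
    (hA0 : φ A ≠ 0) : φ P ≠ 0 := by
  intro hP
  obtain ⟨s, t, rfl⟩ := mem_span_pair.1 hA
  simp [hP, hB] at hA0

theorem centralProj_notMem {L : Submodule K V} (hP : P ∈ L) (hφP : φ P ≠ 0) {X : V}
    (hX : X ∉ L) : centralProj φ P X ∉ L := fun h =>
  hX <| (L.smul_mem_iff hφP).1 <| by
    simpa using L.sub_mem h (centralProj_sub_smul_mem φ P hP X)

end CentralProjection

section ScissorsMap

variable (φ ψ : Dual K V) (P₁ P₂ P₃ P₄ : V)

def scissorsMap : V →ₗ[K] V :=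
  centralProj ψ P₄ ∘ₗ centralProj φ P₃ ∘ₗ centralProj ψ P₂ ∘ₗ centralProj φ P₁

theorem scissorsMap_apply (X : V) : scissorsMap φ ψ P₁ P₂ P₃ P₄ X =
    centralProj ψ P₄ (centralProj φ P₃ (centralProj ψ P₂ (centralProj φ P₁ X))) := rfl

theorem scissorsMap_of_mem_inf_ker {X : V} (hφX : φ X = 0) (hψX : ψ X = 0) :
    scissorsMap φ ψ P₁ P₂ P₃ P₄ X = (ψ P₄ * φ P₃ * ψ P₂ * φ P₁) • X := by
  simp only [scissorsMap_apply, centralProj_of_apply_eq_zero, map_smul, hφX, hψX,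
    smul_smul]
  ring_nf

theorem scissorsMap_sub_smul_mem {L : Submodule K V} (h₁ : P₁ ∈ L) (h₂ : P₂ ∈ L) (h₃ : P₃ ∈ L)
    (h₄ : P₄ ∈ L) (X : V) :
    scissorsMap φ ψ P₁ P₂ P₃ P₄ X - (ψ P₄ * φ P₃ * ψ P₂ * φ P₁) • X ∈ L := by
  set Y₁ := centralProj φ P₁ X
  set Y₂ := centralProj ψ P₂ Y₁
  set Y₃ := centralProj φ P₃ Y₂
  have htelescope : scissorsMap φ ψ P₁ P₂ P₃ P₄ X - (ψ P₄ * φ P₃ * ψ P₂ * φ P₁) • X =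
      (centralProj ψ P₄ Y₃ - ψ P₄ • Y₃) + ψ P₄ • (Y₃ - φ P₃ • Y₂) +
        (ψ P₄ * φ P₃) • (Y₂ - ψ P₂ • Y₁) + (ψ P₄ * φ P₃ * ψ P₂) • (Y₁ - φ P₁ • X) := by
    rw [scissorsMap_apply]; module
  rw [htelescope]
  refine L.add_mem (L.add_mem (L.add_mem ?_ (L.smul_mem _ ?_)) (L.smul_mem _ ?_)) (L.smul_mem _ ?_)
  all_goals exact centralProj_sub_smul_mem _ _ ‹_› _

theorem scissorsMap_mem_span_singleton {A₁ A₂ A₃ A₄ : V}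
    (h₁ : A₁ ∈ span K {P₁, A₂}) (h₂ : A₂ ∈ span K {P₂, A₃}) (h₃ : A₃ ∈ span K {P₃, A₄})
    (h₄ : A₄ ∈ span K {P₄, A₁})
    (hA₁ : ψ A₁ = 0) (hA₂ : φ A₂ = 0) (hA₃ : ψ A₃ = 0) (hA₄ : φ A₄ = 0) :
    scissorsMap φ ψ P₁ P₂ P₃ P₄ A₁ ∈ span K {A₁} := by
  have step {θ : Dual K V} {P A B Y : V} (hA : A ∈ span K {P, B}) (hB : θ B = 0)
      (hY : Y ∈ span K {A}) : centralProj θ P Y ∈ span K {B} := by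
    obtain ⟨c, rfl⟩ := mem_span_singleton.1 hY
    rw [map_smul]
    exact smul_mem _ c (centralProj_mem_span_singleton θ P hA hB)
  exact step h₄ hA₁ (step h₃ hA₄ (step h₂ hA₃ (step h₁ hA₂ (mem_span_singleton_self A₁))))

theorem scissorsMap_eq_smul {L : Submodule K V} (h₁ : P₁ ∈ L) (h₂ : P₂ ∈ L) (h₃ : P₃ ∈ L)
    (h₄ : P₄ ∈ L) {A : V} (hAL : A ∉ L) (hψA : ψ A = 0) (hφA : φ A ≠ 0)
    (hA : scissorsMap φ ψ P₁ P₂ P₃ P₄ A ∈ span K {A}) ⦃X : V⦄ (hX : ψ X = 0) :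
    scissorsMap φ ψ P₁ P₂ P₃ P₄ X = (ψ P₄ * φ P₃ * ψ P₂ * φ P₁) • X := by
  set a := ψ P₄ * φ P₃ * ψ P₂ * φ P₁
  obtain ⟨c, hc⟩ := mem_span_singleton.1 hA
  have hca : c = a := by
    by_contra hca
    have := scissorsMap_sub_smul_mem φ ψ P₁ P₂ P₃ P₄ h₁ h₂ h₃ h₄ A
    rw [← hc, ← sub_smul] at this
    exact hAL ((L.smul_mem_iff (sub_ne_zero.2 hca)).1 this)
  refine LinearMap.eqOn_of_eqOn_inf_ker (f := scissorsMap φ ψ P₁ P₂ P₃ P₄)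
    (g := a • LinearMap.id) (W := LinearMap.ker ψ) hψA hφA (by rw [← hc, hca]; rfl) ?_ hX
  rintro Y ⟨hψY, hφY⟩
  exact scissorsMap_of_mem_inf_ker φ ψ P₁ P₂ P₃ P₄ hφY hψY

end ScissorsMap

end LinearAlgebra

theorem dep3_comm {P A B : Fin 3 → ℝ} : dep3 P A B ↔ dep3 P B A := by
  have : ![P, A, B] ∘ Equiv.swap 1 2 = ![P, B, A] := by
    ext i : 1; fin_cases i <;> rfl
  rw [dep3, dep3, ← this, linearIndependent_equiv]

theorem dep3_iff_mem_span_pair {P A B : Fin 3 → ℝ} (h : LinearIndependent ℝ ![P, A]) :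
    dep3 P A B ↔ B ∈ span ℝ {P, A} := by
  have : Fin.snoc ![P, A] B = ![P, A, B] := by
    ext i : 1; fin_cases i <;> rfl
  rw [dep3, ← this, linearIndependent_finSnoc]
  simp [h, Matrix.range_cons, Set.pair_comm]

theorem dep3_centralProj (φ : Dual ℝ (Fin 3 → ℝ)) {L : Submodule ℝ (Fin 3 → ℝ)}
    {P X : Fin 3 → ℝ} (hP : P ∈ L) (hP0 : P ≠ 0) (hX : X ∉ L) :
    dep3 P X (centralProj φ P X) :=
  (dep3_iff_mem_span_pair (linearIndependent_pair_of_mem_of_notMem hP hP0 hX)).2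
    (centralProj_mem_span_pair φ P X)

theorem exists_scissors_quadrilateral_of_scissorsMap_eq_smul {φ ψ : Dual ℝ (Fin 3 → ℝ)}
    {L : Submodule ℝ (Fin 3 → ℝ)} {P₁ P₂ P₃ P₄ X : Fin 3 → ℝ}
    (hP₁L : P₁ ∈ L) (hP₂L : P₂ ∈ L) (hP₃L : P₃ ∈ L) (hP₄L : P₄ ∈ L)
    (hP₁0 : P₁ ≠ 0) (hP₂0 : P₂ ≠ 0) (hP₃0 : P₃ ≠ 0) (hP₄0 : P₄ ≠ 0)
    (hφP₁ : φ P₁ ≠ 0) (hψP₂ : ψ P₂ ≠ 0) (hφP₃ : φ P₃ ≠ 0) (hψP₄ : ψ P₄ ≠ 0) (hXL : X ∉ L)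
    (hX : scissorsMap φ ψ P₁ P₂ P₃ P₄ X = (ψ P₄ * φ P₃ * ψ P₂ * φ P₁) • X) :
    ∃ A₂ A₃ A₄ : Fin 3 → ℝ,
      A₂ ∈ LinearMap.ker φ ∧ A₄ ∈ LinearMap.ker φ ∧ A₃ ∈ LinearMap.ker ψ ∧
        A₂ ≠ 0 ∧ A₃ ≠ 0 ∧ A₄ ≠ 0 ∧
        dep3 P₁ X A₂ ∧ dep3 P₂ A₂ A₃ ∧ dep3 P₃ A₃ A₄ ∧ dep3 P₄ A₄ X := by
  set A₂ := centralProj φ P₁ X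
  set A₃ := centralProj ψ P₂ A₂
  set A₄ := centralProj φ P₃ A₃
  have hA₂L : A₂ ∉ L := centralProj_notMem φ P₁ hP₁L hφP₁ hXL
  have hA₃L : A₃ ∉ L := centralProj_notMem ψ P₂ hP₂L hψP₂ hA₂L
  have hA₄L : A₄ ∉ L := centralProj_notMem φ P₃ hP₃L hφP₃ hA₃L
  have ha : ψ P₄ * φ P₃ * ψ P₂ * φ P₁ ≠ 0 := by positivity
  refine ⟨A₂, A₃, A₄, apply_centralProj φ P₁ X, apply_centralProj φ P₃ A₃,
    apply_centralProj ψ P₂ A₂, (ne_of_mem_of_not_mem L.zero_mem hA₂L).symm,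
    (ne_of_mem_of_not_mem L.zero_mem hA₃L).symm, (ne_of_mem_of_not_mem L.zero_mem hA₄L).symm,
    dep3_centralProj φ hP₁L hP₁0 hXL, dep3_centralProj ψ hP₂L hP₂0 hA₂L,
    dep3_centralProj φ hP₃L hP₃0 hA₃L, ?_⟩
  rw [dep3_iff_mem_span_pair (linearIndependent_pair_of_mem_of_notMem hP₄L hP₄0 hA₄L),
    ← smul_mem_iff _ ha, ← hX]
  exact centralProj_mem_span_pair ψ P₄ A₄

theorem scissors_porism_general
    (W₁ W₂ L : Submodule ℝ (Fin 3 → ℝ))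
    (hdim₁ : Module.finrank ℝ W₁ = 2) (hdim₂ : Module.finrank ℝ W₂ = 2)
    (A₁ A₂ A₃ A₄ : Fin 3 → ℝ)
    (hA₁W : A₁ ∈ W₁) (hA₃W : A₃ ∈ W₁) (hA₂W : A₂ ∈ W₂) (hA₄W : A₄ ∈ W₂)
    (hA₁m : A₁ ∉ W₁ ⊓ W₂) (hA₂m : A₂ ∉ W₁ ⊓ W₂) (hA₃m : A₃ ∉ W₁ ⊓ W₂) (hA₄m : A₄ ∉ W₁ ⊓ W₂)
    (hA₁L : A₁ ∉ L) (hA₂L : A₂ ∉ L) (hA₃L : A₃ ∉ L) (hA₄L : A₄ ∉ L)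
    (P₁ P₂ P₃ P₄ : Fin 3 → ℝ)
    (hP₁0 : P₁ ≠ 0) (hP₂0 : P₂ ≠ 0) (hP₃0 : P₃ ≠ 0) (hP₄0 : P₄ ≠ 0)
    (hP₁L : P₁ ∈ L) (hP₂L : P₂ ∈ L) (hP₃L : P₃ ∈ L) (hP₄L : P₄ ∈ L)
    (hd₁ : dep3 P₁ A₁ A₂) (hd₂ : dep3 P₂ A₂ A₃) (hd₃ : dep3 P₃ A₃ A₄) (hd₄ : dep3 P₄ A₄ A₁) :
    ∀ A₁' : Fin 3 → ℝ, A₁' ∈ W₁ → A₁' ≠ 0 → A₁' ∉ W₂ → A₁' ∉ L →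
      ∃ A₂' A₃' A₄' : Fin 3 → ℝ,
        A₂' ∈ W₂ ∧ A₄' ∈ W₂ ∧ A₃' ∈ W₁ ∧
        A₂' ≠ 0 ∧ A₃' ≠ 0 ∧ A₄' ≠ 0 ∧
        dep3 P₁ A₁' A₂' ∧ dep3 P₂ A₂' A₃' ∧ dep3 P₃ A₃' A₄' ∧ dep3 P₄ A₄' A₁' := by
  obtain ⟨ψ, rfl⟩ := exists_dual_ker_eq W₁ (by simp [hdim₁])
  obtain ⟨φ, rfl⟩ := exists_dual_ker_eq W₂ (by simp [hdim₂])
  have line {P A B : Fin 3 → ℝ} (hP : P ∈ L) (hP0 : P ≠ 0) (hB : B ∉ L) (hd : dep3 P A B) :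
      A ∈ span ℝ {P, B} :=
    (dep3_iff_mem_span_pair (linearIndependent_pair_of_mem_of_notMem hP hP0 hB)).1
      (dep3_comm.1 hd)
  have h₁ := line hP₁L hP₁0 hA₂L hd₁
  have h₂ := line hP₂L hP₂0 hA₃L hd₂
  have h₃ := line hP₃L hP₃0 hA₄L hd₃
  have h₄ := line hP₄L hP₄0 hA₁L hd₄
  have hφA₁ : φ A₁ ≠ 0 := fun h => hA₁m ⟨hA₁W, h⟩
  have hT := scissorsMap_eq_smul φ ψ P₁ P₂ P₃ P₄ hP₁L hP₂L hP₃L hP₄L hA₁L hA₁W hφA₁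
    (scissorsMap_mem_span_singleton φ ψ P₁ P₂ P₃ P₄ h₁ h₂ h₃ h₄ hA₁W hA₂W hA₃W hA₄W)
  intro X hX _ _ hXL
  exact exists_scissors_quadrilateral_of_scissorsMap_eq_smul hP₁L hP₂L hP₃L hP₄L hP₁0 hP₂0 hP₃0 hP₄0
    (apply_ne_zero_of_mem_span_pair φ P₁ h₁ hA₂W hφA₁)
    (apply_ne_zero_of_mem_span_pair ψ P₂ h₂ hA₃W fun h => hA₂m ⟨h, hA₂W⟩)
    (apply_ne_zero_of_mem_span_pair φ P₃ h₃ hA₄W fun h => hA₃m ⟨hA₃W, h⟩)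
    (apply_ne_zero_of_mem_span_pair ψ P₄ h₄ hA₁W fun h => hA₄m ⟨h, hA₄W⟩)
    hXL (hT hX)

/-- **Scissors porism.** Given a Scissors quadrilateral `A₁ A₂ A₃ A₄` on the lines
`W₁, W₂` with intersection points `P₁, …, P₄` on the line `L`, every admissible starting
point `A₁'` on `W₁` extends to a Scissors quadrilateral with the same intersection
points. -/
theorem scissors_porism
    (W₁ W₂ L : Submodule ℝ (Fin 3 → ℝ))
    (hdim₁ : Module.finrank ℝ W₁ = 2) (hdim₂ : Module.finrank ℝ W₂ = 2)
    (hdimL : Module.finrank ℝ L = 2)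
    (hW : W₁ ≠ W₂)
    (A₁ A₂ A₃ A₄ : Fin 3 → ℝ)
    (hA₁0 : A₁ ≠ 0) (hA₂0 : A₂ ≠ 0) (hA₃0 : A₃ ≠ 0) (hA₄0 : A₄ ≠ 0)
    (hA₁W : A₁ ∈ W₁) (hA₃W : A₃ ∈ W₁) (hA₂W : A₂ ∈ W₂) (hA₄W : A₄ ∈ W₂)
    (h12 : LinearIndependent ℝ ![A₁, A₂]) (h13 : LinearIndependent ℝ ![A₁, A₃])
    (h14 : LinearIndependent ℝ ![A₁, A₄]) (h23 : LinearIndependent ℝ ![A₂, A₃])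
    (h24 : LinearIndependent ℝ ![A₂, A₄]) (h34 : LinearIndependent ℝ ![A₃, A₄])
    (hA₁m : A₁ ∉ W₁ ⊓ W₂) (hA₂m : A₂ ∉ W₁ ⊓ W₂) (hA₃m : A₃ ∉ W₁ ⊓ W₂) (hA₄m : A₄ ∉ W₁ ⊓ W₂)
    (hA₁L : A₁ ∉ L) (hA₂L : A₂ ∉ L) (hA₃L : A₃ ∉ L) (hA₄L : A₄ ∉ L)
    (hs₁ : Submodule.span ℝ {A₁, A₂} ≠ L) (hs₂ : Submodule.span ℝ {A₂, A₃} ≠ L)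
    (hs₃ : Submodule.span ℝ {A₃, A₄} ≠ L) (hs₄ : Submodule.span ℝ {A₄, A₁} ≠ L)
    (P₁ P₂ P₃ P₄ : Fin 3 → ℝ)
    (hP₁0 : P₁ ≠ 0) (hP₂0 : P₂ ≠ 0) (hP₃0 : P₃ ≠ 0) (hP₄0 : P₄ ≠ 0)
    (hP₁L : P₁ ∈ L) (hP₂L : P₂ ∈ L) (hP₃L : P₃ ∈ L) (hP₄L : P₄ ∈ L)
    (hd₁ : dep3 P₁ A₁ A₂) (hd₂ : dep3 P₂ A₂ A₃) (hd₃ : dep3 P₃ A₃ A₄) (hd₄ : dep3 P₄ A₄ A₁) :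
    ∀ A₁' : Fin 3 → ℝ, A₁' ∈ W₁ → A₁' ≠ 0 → A₁' ∉ W₂ → A₁' ∉ L →
      ∃ A₂' A₃' A₄' : Fin 3 → ℝ,
        A₂' ∈ W₂ ∧ A₄' ∈ W₂ ∧ A₃' ∈ W₁ ∧
        A₂' ≠ 0 ∧ A₃' ≠ 0 ∧ A₄' ≠ 0 ∧
        dep3 P₁ A₁' A₂' ∧ dep3 P₂ A₂' A₃' ∧ dep3 P₃ A₃' A₄' ∧ dep3 P₄ A₄' A₁' :=
  scissors_porism_general W₁ W₂ L hdim₁ hdim₂ A₁ A₂ A₃ A₄ hA₁W hA₃W hA₂W hA₄W hA₁m hA₂m hA₃m hA₄m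
    hA₁L hA₂L hA₃L hA₄L P₁ P₂ P₃ P₄ hP₁0 hP₂0 hP₃0 hP₄0 hP₁L hP₂L hP₃L hP₄L hd₁ hd₂ hd₃ hd₄
end

section
/- Let U, V ∈ ℝ³ with ⟨U,U⟩ ≠ 0 and ⟨V,V⟩ ≠ 0, let a, b ∈ ℝ, and set W = aU + bV, assuming ⟨W,W⟩ ≠ 0. Define X := (2a⟨U,V⟩ + b⟨V,V⟩)U − a⟨U,U⟩V. Then ⟨X,X⟩ = ⟨U,U⟩·⟨V,V⟩·⟨W,W⟩; in particular ⟨X,X⟩ ≠ 0, so X does not lie on the conic C. -/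
/-- Minkowski product on ℝ³. -/
def mink (X Y : Fin 3 → ℝ) : ℝ := X 0 * Y 0 + X 1 * Y 1 - X 2 * Y 2

/-!
Only bilinearity and symmetry of the Minkowski product matter. Writing `p = ⟨U,U⟩`,
`q = ⟨V,V⟩`, `r = ⟨U,V⟩` and `c = 2ar + bq`, we get
`⟨X,X⟩ = p (c² − 2arc + a²pq) = p (bqc + a²pq) = pq (a²p + 2abr + b²q) = pq ⟨W,W⟩`,
and a product of nonzero reals is nonzero.
-/

namespace LinearMap.BilinForm

variable {R M : Type*} [CommRing R] [AddCommGroup M] [Module R M]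

theorem IsSymm.apply_smul_sub_smul_self {B : LinearMap.BilinForm R M} (hB : B.IsSymm)
    (U V : M) (a b : R) :
    B ((2 * a * B U V + b * B V V) • U - (a * B U U) • V)
        ((2 * a * B U V + b * B V V) • U - (a * B U U) • V) =
      B U U * B V V * B (a • U + b • V) (a • U + b • V) := by
  simp only [map_sub, map_add, map_smul, LinearMap.sub_apply, LinearMap.add_apply,
    LinearMap.smul_apply, smul_eq_mul, hB.eq V U]
  ring

end LinearMap.BilinForm

def minkForm : LinearMap.BilinForm ℝ (Fin 3 → ℝ) :=
  LinearMap.mk₂ ℝ mink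
    (fun X X' Y => by simp only [mink, Pi.add_apply]; ring)
    (fun c X Y => by simp only [mink, Pi.smul_apply, smul_eq_mul]; ring)
    (fun X Y Y' => by simp only [mink, Pi.add_apply]; ring)
    (fun c X Y => by simp only [mink, Pi.smul_apply, smul_eq_mul]; ring)

@[simp]
theorem minkForm_apply (X Y : Fin 3 → ℝ) : minkForm X Y = mink X Y := rfl

theorem minkForm_isSymm : minkForm.IsSymm :=
  ⟨fun X Y => by simp only [minkForm_apply, mink]; ring⟩

/-- For `U, V` off the conic `C` and `W = aU + bV` off `C`, the point
`X = (2a⟨U,V⟩ + b⟨V,V⟩)U − a⟨U,U⟩V` satisfies `⟨X,X⟩ = ⟨U,U⟩⟨V,V⟩⟨W,W⟩ ≠ 0`,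
so `X` does not lie on `C`. -/
theorem minkowski_square_of_X
    (U V : Fin 3 → ℝ) (hU : mink U U ≠ 0) (hV : mink V V ≠ 0)
    (a b : ℝ) (W : Fin 3 → ℝ) (hW : W = a • U + b • V) (hWW : mink W W ≠ 0)
    (X : Fin 3 → ℝ)
    (hX : X = (2 * a * mink U V + b * mink V V) • U - (a * mink U U) • V) :
    mink X X = mink U U * mink V V * mink W W ∧ mink X X ≠ 0 := by
  have hXX : mink X X = mink U U * mink V V * mink W W := by
    subst hW hX
    simpa only [minkForm_apply] using minkForm_isSymm.apply_smul_sub_smul_self U V a b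
  exact ⟨hXX, hXX ▸ mul_ne_zero (mul_ne_zero hU hV) hWW⟩
end

section
/- Composition lemma for three collinear reversions: Let U, V ∈ ℝ³ with ⟨U,U⟩ ≠ 0 and ⟨V,V⟩ ≠ 0, let a, b ∈ ℝ, set W = aU + bV with ⟨W,W⟩ ≠ 0, and define X := (2a⟨U,V⟩ + b⟨V,V⟩)U − a⟨U,U⟩V. Then M_X = M_W ∘ M_V ∘ M_U as linear maps on ℝ³; consequently M_X ∘ M_W ∘ M_V ∘ M_U = (⟨U,U⟩⟨V,V⟩⟨W,W⟩)² · id, i.e., the four collinear points U, V, W, X have the closing property with respect to C. -/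
/-- The reversion map in the point `P` (with `⟨P,P⟩ ≠ 0`), as a linear map on
representing vectors: `M_P X = ⟨P,P⟩X − 2⟨X,P⟩P`. -/
def rev (P X : Fin 3 → ℝ) : Fin 3 → ℝ := mink P P • X - (2 * mink X P) • P

namespace LinearMap.BilinForm

variable {R M : Type*} [CommRing R] [AddCommGroup M] [Module R M] (B : LinearMap.BilinForm R M)

def reversion (P Y : M) : M := B P P • Y - (2 * B Y P) • P

theorem reversion_reversion (P Y : M) :
    B.reversion P (B.reversion P Y) = B P P ^ 2 • Y := by
  simp only [reversion, map_sub, map_smul, LinearMap.sub_apply, LinearMap.smul_apply,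
    smul_eq_mul]
  module

variable {B} {U V W X : M} {a b : R}

namespace IsSymm

variable (hB : B.IsSymm) (hW : W = a • U + b • V)
  (hX : X = (2 * a * B U V + b * B V V) • U - (a * B U U) • V)
include hB hW hX

theorem reversion_reversion_reversion (Y : M) :
    B.reversion W (B.reversion V (B.reversion U Y)) = B.reversion X Y := by
  subst hW hX
  simp only [reversion, map_sub, map_smul, map_add, LinearMap.sub_apply, LinearMap.add_apply,
    LinearMap.smul_apply, smul_eq_mul, hB.eq V U]
  module

theorem apply_self_eq_mul : B X X = B U U * B V V * B W W := by
  subst hW hX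
  simp only [map_sub, map_smul, map_add, LinearMap.sub_apply, LinearMap.add_apply,
    LinearMap.smul_apply, smul_eq_mul, hB.eq V U]
  ring

theorem reversion_four_eq_smul (Y : M) :
    B.reversion X (B.reversion W (B.reversion V (B.reversion U Y))) =
      (B U U * B V V * B W W) ^ 2 • Y := by
  rw [hB.reversion_reversion_reversion hW hX, reversion_reversion,
    hB.apply_self_eq_mul hW hX]

end IsSymm

end LinearMap.BilinForm

def minkowskiForm : LinearMap.BilinForm ℝ (Fin 3 → ℝ) :=
  LinearMap.mk₂ ℝ mink
    (fun _ _ _ => by simp only [mink, Pi.add_apply]; ring)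
    (fun _ _ _ => by simp only [mink, Pi.smul_apply, smul_eq_mul]; ring)
    (fun _ _ _ => by simp only [mink, Pi.add_apply]; ring)
    (fun _ _ _ => by simp only [mink, Pi.smul_apply, smul_eq_mul]; ring)

theorem minkowskiForm_isSymm : minkowskiForm.IsSymm :=
  ⟨fun _ _ => by simp only [minkowskiForm, LinearMap.mk₂_apply, mink]; ring⟩

theorem composition_of_three_reversions_general
    (U V : Fin 3 → ℝ)
    (a b : ℝ) (W : Fin 3 → ℝ) (hW : W = a • U + b • V)
    (X : Fin 3 → ℝ)
    (hX : X = (2 * a * mink U V + b * mink V V) • U - (a * mink U U) • V) :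
    (∀ Y, rev X Y = rev W (rev V (rev U Y))) ∧
    (∀ Y, rev X (rev W (rev V (rev U Y))) =
      ((mink U U * mink V V * mink W W) ^ 2) • Y) :=
  -- `mink` and `rev` are definitionally `minkowskiForm` and `minkowskiForm.reversion`.
  ⟨fun Y => (minkowskiForm_isSymm.reversion_reversion_reversion hW hX Y).symm,
    minkowskiForm_isSymm.reversion_four_eq_smul hW hX⟩

/-- **Composition lemma for three collinear reversions.** For `U, V` off `C`,
`W = aU + bV` off `C` and `X = (2a⟨U,V⟩ + b⟨V,V⟩)U − a⟨U,U⟩V`, one has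
`M_X = M_W ∘ M_V ∘ M_U`; consequently `M_X ∘ M_W ∘ M_V ∘ M_U` is
`(⟨U,U⟩⟨V,V⟩⟨W,W⟩)²` times the identity, i.e. the four collinear points
`U, V, W, X` have the closing property with respect to `C`. -/
theorem composition_of_three_reversions
    (U V : Fin 3 → ℝ) (hU : mink U U ≠ 0) (hV : mink V V ≠ 0)
    (a b : ℝ) (W : Fin 3 → ℝ) (hW : W = a • U + b • V) (hWW : mink W W ≠ 0)
    (X : Fin 3 → ℝ)
    (hX : X = (2 * a * mink U V + b * mink V V) • U - (a * mink U U) • V) :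
    (∀ Y, rev X Y = rev W (rev V (rev U Y))) ∧
    (∀ Y, rev X (rev W (rev V (rev U Y))) =
      ((mink U U * mink V V * mink W W) ^ 2) • Y) :=
  composition_of_three_reversions_general U V a b W hW X hX
end

section
/- Non-collinear closing is impossible: For i = 1, 2, 3 let Aᵢ, Bᵢ, Cᵢ, Dᵢ be nonzero vectors on the conic C (each with vanishing Minkowski square), the four vertices of each quadrilateral pairwise non-parallel, and A₁, A₂, A₃ pairwise non-parallel (three different quadrilaterals). Let P₁, P₂, P₃, P₄ be nonzero vectors with ⟨Pⱼ,Pⱼ⟩ ≠ 0, pairwise non-parallel and not parallel to any vertex, such that for each i = 1, 2, 3 the triples {P₁, Aᵢ, Bᵢ}, {P₂, Bᵢ, Cᵢ}, {P₃, Cᵢ, Dᵢ}, {P₄, Dᵢ, Aᵢ} are each linearly dependent. Then P₁, P₂, P₃, P₄ lie in a common 2-dimensional subspace of ℝ³, i.e., they are collinear. -/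
open Module Matrix

theorem linearIndependent_iff_det_ne_zero {K : Type*} [Field K] {n : ℕ}
    (A : Matrix (Fin n) (Fin n) K) : LinearIndependent K A ↔ A.det ≠ 0 := by
  rw [← isUnit_iff_ne_zero, ← isUnit_iff_isUnit_det, ← linearIndependent_rows_iff_isUnit]
  rfl

theorem mem_span_pair_of_not_linearIndependent {K V : Type*} [DivisionRing K] [AddCommGroup V]
    [Module K V] {x y z : V} (hxyz : ¬ LinearIndependent K ![x, y, z])
    (hyz : LinearIndependent K ![y, z]) : x ∈ Submodule.span K {y, z} := by
  by_contra hx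
  exact hxyz (linearIndependent_finCons.2 ⟨hyz, by rwa [Matrix.range_cons_cons_empty]⟩)

theorem finrank_span_pair {K V : Type*} [DivisionRing K] [AddCommGroup V] [Module K V] {x y : V}
    (h : LinearIndependent K ![x, y]) : finrank K (Submodule.span K {x, y}) = 2 := by
  rw [← Matrix.range_cons_cons_empty x y ![], finrank_span_eq_card h, Fintype.card_fin]

theorem Module.End.eq_smul_one_of_three_eigenvectors {K V : Type*} [Field K] [AddCommGroup V]
    [Module K V] (hV : finrank K V = 2) {f : Module.End K V} {u v w : V} {a b c : K}
    (huv : LinearIndependent K ![u, v]) (huw : LinearIndependent K ![u, w])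
    (hvw : LinearIndependent K ![v, w])
    (hu : f u = a • u) (hv : f v = b • v) (hw : f w = c • w) : f = a • 1 := by
  let B := basisOfLinearIndependentOfCardEqFinrank huv (by simp [hV])
  have hB : ∀ i, B i = ![u, v] i := by simp [B]
  obtain ⟨α, β, rfl⟩ : ∃ α β : K, w = α • u + β • v :=
    ⟨B.repr w 0, B.repr w 1, by simpa [Fin.sum_univ_two, hB] using (B.sum_repr w).symm⟩
  have hα : α ≠ 0 := by
    rintro rfl
    simpa using LinearIndependent.pair_iff.1 hvw β (-1) (by simp)
  have hβ : β ≠ 0 := by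
    rintro rfl
    simpa using LinearIndependent.pair_iff.1 huw α (-1) (by simp)
  obtain ⟨hac, hbc⟩ := LinearIndependent.pair_iff.1 huv (α * (a - c)) (β * (b - c)) (by
    simp only [map_add, map_smul, hu, hv] at hw
    linear_combination (norm := module) hw)
  have hba : b = a := by
    linear_combination (mul_eq_zero.1 hbc).resolve_left hβ - (mul_eq_zero.1 hac).resolve_left hα
  refine B.ext fun i => ?_
  fin_cases i <;> simp [hB, hu, hv, hba]

theorem Matrix.eq_smul_one_of_three_eigenvectors {K : Type*} [Field K]
    {N : Matrix (Fin 2) (Fin 2) K} {u v w : Fin 2 → K} {a b c : K}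
    (huv : LinearIndependent K ![u, v]) (huw : LinearIndependent K ![u, w])
    (hvw : LinearIndependent K ![v, w])
    (hu : N *ᵥ u = a • u) (hv : N *ᵥ v = b • v) (hw : N *ᵥ w = c • w) : N = a • 1 := by
  apply toLin'.injective
  rw [map_smul, toLin'_one]
  exact Module.End.eq_smul_one_of_three_eigenvectors (by simp) huv huw hvw hu hv hw

theorem dep3_iff_det_eq_zero {P X Y : Fin 3 → ℝ} : dep3 P X Y ↔ det ![P, X, Y] = 0 :=
  (linearIndependent_iff_det_ne_zero _).not_left

def conicPoint (v : Fin 2 → ℝ) : Fin 3 → ℝ :=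
  ![2 * v 0 * v 1, v 1 ^ 2 - v 0 ^ 2, v 1 ^ 2 + v 0 ^ 2]

/-- For `P` off the conic, `conicPoint (conicInvolution P *ᵥ v)` is the second intersection with
the conic of the line through `P` and `conicPoint v`. Under `P ↦ conicInvolution P`, `ℝ³` with the
Minkowski form becomes the traceless matrices with `-det`. -/
def conicInvolution (P : Fin 3 → ℝ) : Matrix (Fin 2) (Fin 2) ℝ :=
  !![-P 0, P 2 - P 1; -(P 1 + P 2), P 0]

theorem conicPoint_smul (t : ℝ) (v : Fin 2 → ℝ) : conicPoint (t • v) = t ^ 2 • conicPoint v := by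
  ext i
  fin_cases i <;> simp [conicPoint] <;> ring

theorem exists_eq_smul_conicPoint {X : Fin 3 → ℝ} (hX : X ≠ 0) (hC : mink X X = 0) :
    ∃ v : Fin 2 → ℝ, ∃ c : ℝ, X = c • conicPoint v := by
  have hm : X 0 ^ 2 = (X 2 + X 1) * (X 2 - X 1) := by unfold mink at hC; linear_combination hC
  by_cases hsum : X 2 + X 1 = 0
  · have hdiff : X 2 - X 1 ≠ 0 := by
      intro hdiff
      have h0 : X 0 = 0 := by simpa [hsum] using hm
      exact hX (funext fun i => by fin_cases i <;> simp <;> linarith)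
    refine ⟨![X 2 - X 1, X 0], (2 * (X 2 - X 1))⁻¹, funext fun i => ?_⟩
    fin_cases i <;> simp [conicPoint, hm] <;> field_simp <;> ring
  · refine ⟨![X 0, X 2 + X 1], (2 * (X 2 + X 1))⁻¹, funext fun i => ?_⟩
    fin_cases i <;> simp [conicPoint, hm] <;> field_simp <;> ring

theorem linearIndependent_of_smul_conicPoint {X Y : Fin 3 → ℝ} {v w : Fin 2 → ℝ} {c d : ℝ}
    (hXv : X = c • conicPoint v) (hYw : Y = d • conicPoint w) (hXY : LinearIndependent ℝ ![X, Y]) :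
    LinearIndependent ℝ ![v, w] := by
  have hw : w ≠ 0 := by
    rintro rfl
    exact hXY.ne_zero 1 (by simp [hYw, conicPoint])
  rw [LinearIndependent.pair_symm_iff, LinearIndependent.pair_iff' hw]
  rintro t rfl
  have hd : d ≠ 0 := by
    rintro rfl
    exact hXY.ne_zero 1 (by simp [hYw])
  exact hd (LinearIndependent.pair_iff.1 hXY d (-(c * t ^ 2)) (by
    rw [hXv, hYw, conicPoint_smul]; module)).1

theorem det_smul_conicPoint (P : Fin 3 → ℝ) (c d : ℝ) (v w : Fin 2 → ℝ) :
    det ![P, c • conicPoint v, d • conicPoint w] =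
      c * d * (2 * det ![v, w] * det ![conicInvolution P *ᵥ v, w]) := by
  rw [det_fin_three (A := ![P, _, _]), det_fin_two (A := ![v, w]), det_fin_two (A := ![_, w])]
  simp [conicPoint, conicInvolution, dotProduct, Fin.sum_univ_two]
  ring

theorem exists_conicInvolution_mulVec_eq_smul {P X Y : Fin 3 → ℝ} {v w : Fin 2 → ℝ} {c d : ℝ}
    (hXv : X = c • conicPoint v) (hYw : Y = d • conicPoint w)
    (hXY : LinearIndependent ℝ ![X, Y]) (hP : dep3 P X Y) :
    ∃ t : ℝ, conicInvolution P *ᵥ v = t • w := by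
  have hvw := linearIndependent_of_smul_conicPoint hXv hYw hXY
  have hc : c ≠ 0 := by rintro rfl; exact hXY.ne_zero 0 (by simp [hXv])
  have hd : d ≠ 0 := by rintro rfl; exact hXY.ne_zero 1 (by simp [hYw])
  have hdet : det ![conicInvolution P *ᵥ v, w] = 0 := by
    have := dep3_iff_det_eq_zero.1 hP
    rw [hXv, hYw, det_smul_conicPoint] at this
    simpa [hc, hd, (linearIndependent_iff_det_ne_zero _).1 hvw] using this
  have hw : w ≠ 0 := hvw.ne_zero 1
  have hdep : ¬ LinearIndependent ℝ ![w, conicInvolution P *ᵥ v] := by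
    rw [LinearIndependent.pair_symm_iff]
    exact (linearIndependent_iff_det_ne_zero _).not_left.2 hdet
  obtain ⟨t, ht⟩ : ∃ t : ℝ, t • w = conicInvolution P *ᵥ v := by
    simpa only [LinearIndependent.pair_iff' hw, not_forall, not_not] using hdep
  exact ⟨t, ht.symm⟩

theorem exists_conicInvolution_prod_mulVec_eq_smul {P₁ P₂ P₃ P₄ A B C D : Fin 3 → ℝ}
    (hA : mink A A = 0) (hB : mink B B = 0) (hC : mink C C = 0) (hD : mink D D = 0)
    (hAB : LinearIndependent ℝ ![A, B]) (hBC : LinearIndependent ℝ ![B, C])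
    (hCD : LinearIndependent ℝ ![C, D]) (hDA : LinearIndependent ℝ ![D, A])
    (h₁ : dep3 P₁ A B) (h₂ : dep3 P₂ B C) (h₃ : dep3 P₃ C D) (h₄ : dep3 P₄ D A) :
    ∃ (a : Fin 2 → ℝ) (α m : ℝ), A = α • conicPoint a ∧
      (conicInvolution P₄ * conicInvolution P₃ * conicInvolution P₂ * conicInvolution P₁) *ᵥ a =
        m • a := by
  obtain ⟨a, α, hAa⟩ := exists_eq_smul_conicPoint (X := A) (hAB.ne_zero 0) hA
  obtain ⟨b, _, hBb⟩ := exists_eq_smul_conicPoint (X := B) (hBC.ne_zero 0) hB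
  obtain ⟨c, _, hCc⟩ := exists_eq_smul_conicPoint (X := C) (hCD.ne_zero 0) hC
  obtain ⟨d, _, hDd⟩ := exists_eq_smul_conicPoint (X := D) (hDA.ne_zero 0) hD
  obtain ⟨t₁, ht₁⟩ := exists_conicInvolution_mulVec_eq_smul hAa hBb hAB h₁
  obtain ⟨t₂, ht₂⟩ := exists_conicInvolution_mulVec_eq_smul hBb hCc hBC h₂
  obtain ⟨t₃, ht₃⟩ := exists_conicInvolution_mulVec_eq_smul hCc hDd hCD h₃
  obtain ⟨t₄, ht₄⟩ := exists_conicInvolution_mulVec_eq_smul hDd hAa hDA h₄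
  refine ⟨a, α, t₁ * (t₂ * (t₃ * t₄)), hAa, ?_⟩
  simp only [← mulVec_mulVec, ht₁, mulVec_smul, ht₂, ht₃, ht₄, smul_smul]

theorem conicInvolution_mul_self (P : Fin 3 → ℝ) :
    conicInvolution P * conicInvolution P = mink P P • 1 := by
  ext i j
  fin_cases i <;> fin_cases j <;> simp [conicInvolution, mink, mul_apply, Fin.sum_univ_two] <;> ring

theorem trace_conicInvolution (P : Fin 3 → ℝ) : trace (conicInvolution P) = 0 := by
  simp [conicInvolution, trace_fin_two]

theorem trace_conicInvolution_mul_mul (X Y Z : Fin 3 → ℝ) :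
    trace (conicInvolution X * conicInvolution Y * conicInvolution Z) = -2 * det ![X, Y, Z] := by
  rw [det_fin_three (A := ![X, Y, Z])]
  simp [trace_fin_two, conicInvolution]
  ring

theorem det_eq_zero_of_conicInvolution_prod_eq_smul_one_left {P₁ P₂ P₃ P₄ : Fin 3 → ℝ} {m : ℝ}
    (hN : conicInvolution P₄ * conicInvolution P₃ * conicInvolution P₂ * conicInvolution P₁ = m • 1)
    (hP₄ : mink P₄ P₄ ≠ 0) : det ![P₃, P₂, P₁] = 0 := by
  have : mink P₄ P₄ * (-2 * det ![P₃, P₂, P₁]) = 0 := calc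
    _ = trace (conicInvolution P₄ * conicInvolution P₄ *
          (conicInvolution P₃ * conicInvolution P₂ * conicInvolution P₁)) := by
      rw [conicInvolution_mul_self, Matrix.smul_mul, Matrix.one_mul, trace_smul,
        trace_conicInvolution_mul_mul, smul_eq_mul]
    _ = trace (conicInvolution P₄ * (m • 1)) := by rw [← hN]; simp only [mul_assoc]
    _ = 0 := by rw [Matrix.mul_smul, Matrix.mul_one, trace_smul, trace_conicInvolution, smul_zero]
  simpa [hP₄] using this

theorem det_eq_zero_of_conicInvolution_prod_eq_smul_one_right {P₁ P₂ P₃ P₄ : Fin 3 → ℝ} {m : ℝ}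
    (hN : conicInvolution P₄ * conicInvolution P₃ * conicInvolution P₂ * conicInvolution P₁ = m • 1)
    (hP₁ : mink P₁ P₁ ≠ 0) : det ![P₄, P₃, P₂] = 0 := by
  have : mink P₁ P₁ * (-2 * det ![P₄, P₃, P₂]) = 0 := calc
    _ = trace (conicInvolution P₄ * conicInvolution P₃ * conicInvolution P₂ *
          (conicInvolution P₁ * conicInvolution P₁)) := by
      rw [conicInvolution_mul_self, Matrix.mul_smul, Matrix.mul_one, trace_smul,
        trace_conicInvolution_mul_mul, smul_eq_mul]
    _ = trace ((m • 1) * conicInvolution P₁) := by rw [← hN]; simp only [mul_assoc]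
    _ = 0 := by rw [Matrix.smul_mul, Matrix.one_mul, trace_smul, trace_conicInvolution, smul_zero]
  simpa [hP₁] using this

theorem noncollinear_closing_impossible_general
    (A B C D : Fin 3 → (Fin 3 → ℝ))
    (honC : ∀ i : Fin 3, mink (A i) (A i) = 0 ∧ mink (B i) (B i) = 0 ∧
      mink (C i) (C i) = 0 ∧ mink (D i) (D i) = 0)
    (hquad : ∀ i : Fin 3,
      LinearIndependent ℝ ![A i, B i] ∧ LinearIndependent ℝ ![A i, C i] ∧
      LinearIndependent ℝ ![A i, D i] ∧ LinearIndependent ℝ ![B i, C i] ∧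
      LinearIndependent ℝ ![B i, D i] ∧ LinearIndependent ℝ ![C i, D i])
    (hthree : ∀ i j : Fin 3, i ≠ j → LinearIndependent ℝ ![A i, A j])
    (P₁ P₂ P₃ P₄ : Fin 3 → ℝ)
    (hP₁C : mink P₁ P₁ ≠ 0)
    (hP₄C : mink P₄ P₄ ≠ 0)
    (hPpar : LinearIndependent ℝ ![P₁, P₂] ∧ LinearIndependent ℝ ![P₁, P₃] ∧
      LinearIndependent ℝ ![P₁, P₄] ∧ LinearIndependent ℝ ![P₂, P₃] ∧
      LinearIndependent ℝ ![P₂, P₄] ∧ LinearIndependent ℝ ![P₃, P₄])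
    (hdep : ∀ i : Fin 3, dep3 P₁ (A i) (B i) ∧ dep3 P₂ (B i) (C i) ∧
      dep3 P₃ (C i) (D i) ∧ dep3 P₄ (D i) (A i)) :
    ∃ W : Submodule ℝ (Fin 3 → ℝ), Module.finrank ℝ W = 2 ∧
      P₁ ∈ W ∧ P₂ ∈ W ∧ P₃ ∈ W ∧ P₄ ∈ W := by
  choose a α m hAa heig using fun i => exists_conicInvolution_prod_mulVec_eq_smul
    (honC i).1 (honC i).2.1 (honC i).2.2.1 (honC i).2.2.2 (hquad i).1 (hquad i).2.2.2.1
    (hquad i).2.2.2.2.2 (LinearIndependent.pair_symm_iff.1 (hquad i).2.2.1)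
    (hdep i).1 (hdep i).2.1 (hdep i).2.2.1 (hdep i).2.2.2
  have ha : ∀ i j, i ≠ j → LinearIndependent ℝ ![a i, a j] := fun i j hij =>
    linearIndependent_of_smul_conicPoint (hAa i) (hAa j) (hthree i j hij)
  have hN := Matrix.eq_smul_one_of_three_eigenvectors (ha 0 1 (by decide)) (ha 0 2 (by decide))
    (ha 1 2 (by decide)) (heig 0) (heig 1) (heig 2)
  have hP₃ : P₃ ∈ Submodule.span ℝ {P₂, P₁} := mem_span_pair_of_not_linearIndependent
    (dep3_iff_det_eq_zero.2 (det_eq_zero_of_conicInvolution_prod_eq_smul_one_left hN hP₄C))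
    (LinearIndependent.pair_symm_iff.1 hPpar.1)
  have hP₄ : P₄ ∈ Submodule.span ℝ {P₃, P₂} := mem_span_pair_of_not_linearIndependent
    (dep3_iff_det_eq_zero.2 (det_eq_zero_of_conicInvolution_prod_eq_smul_one_right hN hP₁C))
    (LinearIndependent.pair_symm_iff.1 hPpar.2.2.2.1)
  rw [Set.pair_comm] at hP₃
  refine ⟨Submodule.span ℝ {P₁, P₂}, finrank_span_pair hPpar.1, Submodule.subset_span (by simp),
    Submodule.subset_span (by simp), hP₃, Submodule.span_le.2 ?_ hP₄⟩
  rintro x (rfl | rfl)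
  exacts [hP₃, Submodule.subset_span (by simp)]

/-- **Non-collinear closing is impossible.** If three different quadrilaterals
`Aᵢ Bᵢ Cᵢ Dᵢ` inscribed in the conic `C` have sides passing through the same four
points `P₁, P₂, P₃, P₄` off `C`, then `P₁, P₂, P₃, P₄` are collinear, i.e. they lie in
a common 2-dimensional subspace of ℝ³. -/
theorem noncollinear_closing_impossible
    (A B C D : Fin 3 → (Fin 3 → ℝ))
    (hne : ∀ i : Fin 3, A i ≠ 0 ∧ B i ≠ 0 ∧ C i ≠ 0 ∧ D i ≠ 0)
    (honC : ∀ i : Fin 3, mink (A i) (A i) = 0 ∧ mink (B i) (B i) = 0 ∧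
      mink (C i) (C i) = 0 ∧ mink (D i) (D i) = 0)
    (hquad : ∀ i : Fin 3,
      LinearIndependent ℝ ![A i, B i] ∧ LinearIndependent ℝ ![A i, C i] ∧
      LinearIndependent ℝ ![A i, D i] ∧ LinearIndependent ℝ ![B i, C i] ∧
      LinearIndependent ℝ ![B i, D i] ∧ LinearIndependent ℝ ![C i, D i])
    (hthree : ∀ i j : Fin 3, i ≠ j → LinearIndependent ℝ ![A i, A j])
    (P₁ P₂ P₃ P₄ : Fin 3 → ℝ)
    (hP₁0 : P₁ ≠ 0) (hP₂0 : P₂ ≠ 0) (hP₃0 : P₃ ≠ 0) (hP₄0 : P₄ ≠ 0)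
    (hP₁C : mink P₁ P₁ ≠ 0) (hP₂C : mink P₂ P₂ ≠ 0)
    (hP₃C : mink P₃ P₃ ≠ 0) (hP₄C : mink P₄ P₄ ≠ 0)
    (hPpar : LinearIndependent ℝ ![P₁, P₂] ∧ LinearIndependent ℝ ![P₁, P₃] ∧
      LinearIndependent ℝ ![P₁, P₄] ∧ LinearIndependent ℝ ![P₂, P₃] ∧
      LinearIndependent ℝ ![P₂, P₄] ∧ LinearIndependent ℝ ![P₃, P₄])
    (hPvert : ∀ Q : Fin 3 → ℝ, (Q = P₁ ∨ Q = P₂ ∨ Q = P₃ ∨ Q = P₄) → ∀ i : Fin 3,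
      LinearIndependent ℝ ![Q, A i] ∧ LinearIndependent ℝ ![Q, B i] ∧
      LinearIndependent ℝ ![Q, C i] ∧ LinearIndependent ℝ ![Q, D i])
    (hdep : ∀ i : Fin 3, dep3 P₁ (A i) (B i) ∧ dep3 P₂ (B i) (C i) ∧
      dep3 P₃ (C i) (D i) ∧ dep3 P₄ (D i) (A i)) :
    ∃ W : Submodule ℝ (Fin 3 → ℝ), Module.finrank ℝ W = 2 ∧
      P₁ ∈ W ∧ P₂ ∈ W ∧ P₃ ∈ W ∧ P₄ ∈ W :=
  noncollinear_closing_impossible_general A B C D honC hquad hthree P₁ P₂ P₃ P₄ hP₁C hP₄C hPpar hdep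
end

section
/- Fixed points of a double reversion, secant and pole case: Let U, V ∈ ℝ³ be linearly independent with ⟨U,U⟩ ≠ 0 and ⟨V,V⟩ ≠ 0. Then: (i) if P ≠ 0 satisfies ⟨P,U⟩ = 0 and ⟨P,V⟩ = 0 (P is the pole of the line UV with respect to C), then M_V(M_U P) = ⟨U,U⟩⟨V,V⟩ P, so P is a fixed point of φ_V ∘ φ_U; (ii) if R ∈ span{U,V} is nonzero with ⟨R,R⟩ = 0 (an intersection point of the line UV with C), then M_V(M_U R) = μR for some μ ≠ 0, so R is a fixed point of φ_V ∘ φ_U. -/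
lemma mink_comm (X Y : Fin 3 → ℝ) : mink X Y = mink Y X := by
  simp only [mink]; ring

lemma mink_add_left (X Y Z : Fin 3 → ℝ) : mink (X + Y) Z = mink X Z + mink Y Z := by
  simp only [mink, Pi.add_apply]; ring

lemma mink_add_right (X Y Z : Fin 3 → ℝ) : mink X (Y + Z) = mink X Y + mink X Z := by
  rw [mink_comm, mink_add_left, mink_comm Y, mink_comm Z]

lemma mink_sub_left (X Y Z : Fin 3 → ℝ) : mink (X - Y) Z = mink X Z - mink Y Z := by
  simp only [mink, Pi.sub_apply]; ring

lemma mink_smul_left (c : ℝ) (X Y : Fin 3 → ℝ) : mink (c • X) Y = c * mink X Y := by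
  simp only [mink, Pi.smul_apply, smul_eq_mul]; ring

lemma mink_smul_right (c : ℝ) (X Y : Fin 3 → ℝ) : mink X (c • Y) = c * mink X Y := by
  rw [mink_comm, mink_smul_left, mink_comm]

lemma smul_eq_zero_of_mink_self_eq_zero {X : Fin 3 → ℝ} (hX : mink X X ≠ 0) {a : ℝ}
    (h : mink (a • X) (a • X) = 0) : a • X = 0 := by
  rw [mink_smul_left, mink_smul_right, ← mul_assoc, mul_eq_zero, mul_self_eq_zero] at h
  rcases h with ha | hX'
  · rw [ha, zero_smul]
  · exact absurd hX' hX

lemma rev_smul (P X : Fin 3 → ℝ) (c : ℝ) : rev P (c • X) = c • rev P X := by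
  simp only [rev, mink_smul_left]
  module

lemma rev_rev (P X : Fin 3 → ℝ) : rev P (rev P X) = mink P P ^ 2 • X := by
  simp only [rev, mink_sub_left, mink_smul_left]
  module

lemma rev_of_mink_eq_zero {P X : Fin 3 → ℝ} (h : mink X P = 0) : rev P X = mink P P • X := by
  simp [rev, h]

lemma smul_rev_of_mink_self_eq_zero (U V : Fin 3 → ℝ) (a b : ℝ)
    (hR : mink (a • U + b • V) (a • U + b • V) = 0) :
    a • rev U (a • U + b • V) = b • ((b * mink V V) • U + (a * mink U U) • V) := by
  simp only [mink_add_left, mink_add_right, mink_smul_left, mink_smul_right,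
    mink_comm V U] at hR
  simp only [rev, mink_add_left, mink_smul_left, mink_comm V U]
  linear_combination (norm := module) (-hR) • U

lemma sq_smul_rev_rev_of_mink_self_eq_zero (U V : Fin 3 → ℝ) (a b : ℝ)
    (hR : mink (a • U + b • V) (a • U + b • V) = 0) :
    a ^ 2 • rev V (rev U (a • U + b • V)) = (b * mink V V) ^ 2 • (a • U + b • V) := by
  set R := a • U + b • V
  set S := (b * mink V V) • U + (a * mink U U) • V
  have hMU : a • rev U R = b • S := smul_rev_of_mink_self_eq_zero U V a b hR
  have hMV : b • rev V R = a • S := by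
    have hR' : mink (b • V + a • U) (b • V + a • U) = 0 := by rwa [add_comm]
    simpa only [add_comm, R, S] using smul_rev_of_mink_self_eq_zero V U b a hR'
  calc a ^ 2 • rev V (rev U R)
      = a • rev V (a • rev U R) := by rw [rev_smul, smul_smul, sq]
    _ = b • rev V (a • S) := by rw [hMU, rev_smul, rev_smul, smul_comm]
    _ = b ^ 2 • rev V (rev V R) := by rw [← hMV, rev_smul, smul_smul, sq]
    _ = (b * mink V V) ^ 2 • R := by rw [rev_rev, smul_smul, mul_pow]

theorem double_reversion_fixed_points_general
    (U V : Fin 3 → ℝ)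
    (hU : mink U U ≠ 0) (hV : mink V V ≠ 0) :
    (∀ P : Fin 3 → ℝ, P ≠ 0 → mink P U = 0 → mink P V = 0 →
      rev V (rev U P) = (mink U U * mink V V) • P) ∧
    (∀ R : Fin 3 → ℝ, R ∈ Submodule.span ℝ {U, V} → R ≠ 0 → mink R R = 0 →
      ∃ μ : ℝ, μ ≠ 0 ∧ rev V (rev U R) = μ • R) := by
  refine ⟨fun P _ hPU hPV => ?_, fun R hR hR0 hRR => ?_⟩
  · rw [rev_of_mink_eq_zero hPU, rev_smul, rev_of_mink_eq_zero hPV, smul_smul, mul_comm]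
  obtain ⟨a, b, rfl⟩ := Submodule.mem_span_pair.mp hR
  have ha : a ≠ 0 := by
    rintro rfl
    rw [zero_smul, zero_add] at hR0 hRR
    exact hR0 (smul_eq_zero_of_mink_self_eq_zero hV hRR)
  have hb : b ≠ 0 := by
    rintro rfl
    rw [zero_smul, add_zero] at hR0 hRR
    exact hR0 (smul_eq_zero_of_mink_self_eq_zero hU hRR)
  refine ⟨(b * mink V V / a) ^ 2, by positivity, ?_⟩
  rw [div_pow, div_eq_inv_mul, mul_smul, ← sq_smul_rev_rev_of_mink_self_eq_zero U V a b hRR,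
    inv_smul_smul₀ (pow_ne_zero 2 ha)]

/-- **Fixed points of a double reversion (secant and pole case).** For `U, V` off the
conic `C` and linearly independent:
(i) the pole `P` of the line `UV` satisfies `M_V (M_U P) = ⟨U,U⟩⟨V,V⟩ P`, so it is a
projective fixed point of `φ_V ∘ φ_U`;
(ii) every nonzero `R ∈ span{U,V}` with `⟨R,R⟩ = 0` (intersection of the line `UV`
with `C`) is a projective fixed point of `φ_V ∘ φ_U`. -/
theorem double_reversion_fixed_points
    (U V : Fin 3 → ℝ) (hUV : LinearIndependent ℝ ![U, V])
    (hU : mink U U ≠ 0) (hV : mink V V ≠ 0) :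
    (∀ P : Fin 3 → ℝ, P ≠ 0 → mink P U = 0 → mink P V = 0 →
      rev V (rev U P) = (mink U U * mink V V) • P) ∧
    (∀ R : Fin 3 → ℝ, R ∈ Submodule.span ℝ {U, V} → R ≠ 0 → mink R R = 0 →
      ∃ μ : ℝ, μ ≠ 0 ∧ rev V (rev U R) = μ • R) :=
  double_reversion_fixed_points_general U V hU hV
end
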